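/- arXiv:funct-an/9707009 — 3 statements merged into one kernel-verified Lean document; each statement's English description precedes it below -/
import Mathlib

section
/- Let α be a strongly continuous one-parameter isometric representation on a Banach space E, and let y, z ∈ ℂ lie on the same side of the real axis (Im y and Im z have the same sign, or one is zero). Then α_y ∘ α_z = α_{y+z} as unbounded operators, i.e. D(α_y α_z) = D(α_{y+z}) and they agree there. -/
open Complex MeasureTheory Filter Topology Set

noncomputable section

/-- The closed horizontal strip between the real axis and the line `Im = z.im`. -/
def hStrip (z : ℂ) : Set ℂ := {y : ℂ | y.im ∈ Set.uIcc 0 z.im}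

/-- A strongly continuous one-parameter (contractive, hence isometric) representation. -/
structure IsOneParamRep {E : Type*} [NormedAddCommGroup E] [NormedSpace ℂ E]
    (α : ℝ → E →L[ℂ] E) : Prop where
  map_add : ∀ s t : ℝ, α (s + t) = (α s).comp (α t)
  map_zero : α 0 = ContinuousLinearMap.id ℂ E
  norm_le : ∀ t : ℝ, ‖α t‖ ≤ 1
  strong_cont : ∀ a : E, Continuous fun t : ℝ => α t a

/-- `(a, b)` lies in the graph of the analytic continuation `α_z`:  there is a function `f`,
continuous on the strip `S(z)`, analytic in its interior, agreeing with `t ↦ α_t a` on `ℝ`,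
with `f z = b`. -/
def HasContVal {E : Type*} [NormedAddCommGroup E] [NormedSpace ℂ E]
    (α : ℝ → E →L[ℂ] E) (z : ℂ) (a b : E) : Prop :=
  ∃ f : ℂ → E, ContinuousOn f (hStrip z) ∧
    DifferentiableOn ℂ f (interior (hStrip z)) ∧
    (∀ t : ℝ, f t = α t a) ∧ f z = b

/-!
If `f` continues `t ↦ α t a` to `S(z)` and `g` continues `t ↦ α t (f z)` to `S(y)`, glue `f` with
the translate `w ↦ g (w - z)` along the line `Im w = Im z` to get a continuation on `S(y + z)`.
The pieces agree on that line because `f (w + s) = α s (f w)`: both sides continue the same orbit,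
and a continuation vanishing on `ℝ` vanishes, since its extension by `0` across `ℝ` is holomorphic.
Both gluings are holomorphic because, by Morera's theorem, a horizontal line is removable for
continuous functions. The converse is restriction and translation, and the lower half-plane is
reduced to the upper one through `t ↦ α (-t)` and `w ↦ -w`.
-/

open scoped Interval

section HorizontalLine

variable {E : Type*} [NormedAddCommGroup E] [NormedSpace ℂ E]

lemma wedgeIntegral_boundary_split {f : ℂ → E} {z w : ℂ} {m : ℝ}
    (hf : ContinuousOn f (Rectangle z w)) (hm : m ∈ [[z.im, w.im]]) :
    wedgeIntegral z w f + wedgeIntegral w z f =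
      (wedgeIntegral z ⟨w.re, m⟩ f + wedgeIntegral ⟨w.re, m⟩ z f) +
        (wedgeIntegral ⟨z.re, m⟩ w f + wedgeIntegral w ⟨z.re, m⟩ f) := by
  have vert : ∀ x ∈ [[z.re, w.re]], ∀ c ∈ [[z.im, w.im]], ∀ d ∈ [[z.im, w.im]],
      IntervalIntegrable (fun y : ℝ => f (x + y * I)) volume c d := by
    intro x hx c hc d hd
    refine ContinuousOn.intervalIntegrable (hf.comp (by fun_prop) fun y hy => ?_)
    simpa [Rectangle, mem_reProdIm] using ⟨hx, uIcc_subset_uIcc hc hd hy⟩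
  simp only [wedgeIntegral]
  rw [← intervalIntegral.integral_add_adjacent_intervals
      (vert _ right_mem_uIcc _ left_mem_uIcc _ hm) (vert _ right_mem_uIcc _ hm _ right_mem_uIcc),
    ← intervalIntegral.integral_add_adjacent_intervals
      (vert _ left_mem_uIcc _ right_mem_uIcc _ hm) (vert _ left_mem_uIcc _ hm _ left_mem_uIcc),
    intervalIntegral.integral_symm (f := fun x : ℝ => f (x + m * I)) z.re w.re]
  simp only [smul_add]
  abel

lemma notMem_Ioo_min_max_right (a m : ℝ) : m ∉ Ioo (min a m) (max a m) := by
  rintro ⟨h₁, h₂⟩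
  rcases le_total a m with h | h
  · exact h₂.ne (max_eq_right h).symm
  · exact h₁.ne (min_eq_right h)

lemma isConservativeOn_of_differentiableAt_of_im_ne {U : Set ℂ} {m : ℝ} {f : ℂ → E}
    (hc : ContinuousOn f U) (hd : ∀ w ∈ U, w.im ≠ m → DifferentiableAt ℂ f w) :
    IsConservativeOn f U := by
  have off_line : ∀ z w, Rectangle z w ⊆ U → m ∉ Ioo (min z.im w.im) (max z.im w.im) →
      wedgeIntegral z w f + wedgeIntegral w z f = 0 := by
    intro z w hR hm
    rw [wedgeIntegral_add_wedgeIntegral_eq]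
    refine integral_boundary_rect_eq_zero_of_continuousOn_of_differentiableOn f z w
      (hc.mono hR) fun p hp => (hd p (hR ?_) fun h => hm (h ▸ hp.2)).differentiableWithinAt
    exact ⟨Ioo_subset_Icc_self hp.1, Ioo_subset_Icc_self hp.2⟩
  intro z w hR
  rw [← add_eq_zero_iff_eq_neg]
  by_cases hm : m ∈ Ioo (min z.im w.im) (max z.im w.im)
  · have hm' : m ∈ [[z.im, w.im]] := Ioo_subset_Icc_self hm
    rw [wedgeIntegral_boundary_split (hc.mono hR) hm']
    have h₁ : Rectangle z ⟨w.re, m⟩ ⊆ U := fun p hp =>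
      hR ⟨hp.1, uIcc_subset_uIcc left_mem_uIcc hm' hp.2⟩
    have h₂ : Rectangle ⟨z.re, m⟩ w ⊆ U := fun p hp =>
      hR ⟨hp.1, uIcc_subset_uIcc hm' right_mem_uIcc hp.2⟩
    rw [off_line _ _ h₁ (notMem_Ioo_min_max_right _ _),
      off_line _ _ h₂ (by simpa [min_comm, max_comm] using notMem_Ioo_min_max_right w.im m),
      add_zero]
  · exact off_line z w hR hm

theorem differentiableOn_of_differentiableAt_of_im_ne [CompleteSpace E] {U : Set ℂ} {m : ℝ}
    {f : ℂ → E} (hU : IsOpen U) (hc : ContinuousOn f U)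
    (hd : ∀ w ∈ U, w.im ≠ m → DifferentiableAt ℂ f w) : DifferentiableOn ℂ f U :=
  (isConservativeOn_and_continuousOn_iff_isDifferentiableOn hU).1
    ⟨isConservativeOn_of_differentiableAt_of_im_ne hc hd, hc⟩

end HorizontalLine

section Gluing

lemma continuousOn_ite_im_le {X : Type*} [TopologicalSpace X] {m : ℝ} {f g : ℂ → X} {s : Set ℂ}
    (hf : ContinuousOn f (s ∩ {w | w.im ≤ m}))
    (hg : ContinuousOn g (s ∩ {w | m ≤ w.im})) (hfg : ∀ w ∈ s, w.im = m → f w = g w) :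
    ContinuousOn (fun w => if w.im ≤ m then f w else g w) s := by
  refine ContinuousOn.if (fun w hw => hfg w hw.1 ?_) ?_ (hg.mono ?_)
  · exact frontier_le_subset_eq continuous_im continuous_const hw.2
  · rwa [(isClosed_le continuous_im continuous_const).closure_eq]
  · simp only [not_le]
    exact inter_subset_inter_right _ (closure_lt_subset_le continuous_const continuous_im)

variable {E : Type*} [NormedAddCommGroup E] [NormedSpace ℂ E] [CompleteSpace E]

theorem differentiableOn_ite_im_le {m : ℝ} {f g : ℂ → E} {U : Set ℂ} (hU : IsOpen U)
    (hc : ContinuousOn (fun w => if w.im ≤ m then f w else g w) U)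
    (hfd : DifferentiableOn ℂ f (U ∩ {w | w.im < m}))
    (hgd : DifferentiableOn ℂ g (U ∩ {w | m < w.im})) :
    DifferentiableOn ℂ (fun w => if w.im ≤ m then f w else g w) U := by
  refine differentiableOn_of_differentiableAt_of_im_ne (m := m) hU hc fun w hw hne => ?_
  rcases hne.lt_or_gt with hlt | hgt
  · have hopen : IsOpen (U ∩ {w | w.im < m}) := hU.inter (isOpen_lt continuous_im continuous_const)
    refine (hfd.differentiableAt (hopen.mem_nhds ⟨hw, hlt⟩)).congr_of_eventuallyEq ?_
    filter_upwards [hopen.mem_nhds ⟨hw, hlt⟩] with v hv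
    exact if_pos hv.2.le
  · have hopen : IsOpen (U ∩ {w | m < w.im}) := hU.inter (isOpen_lt continuous_const continuous_im)
    refine (hgd.differentiableAt (hopen.mem_nhds ⟨hw, hgt⟩)).congr_of_eventuallyEq ?_
    filter_upwards [hopen.mem_nhds ⟨hw, hgt⟩] with v hv
    exact if_neg hv.2.not_ge

end Gluing

section Strip

lemma hStrip_of_nonneg {z : ℂ} (hz : 0 ≤ z.im) : hStrip z = im ⁻¹' Icc 0 z.im := by
  rw [hStrip, uIcc_of_le hz]
  rfl

lemma interior_hStrip_of_nonneg {z : ℂ} (hz : 0 ≤ z.im) :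
    interior (hStrip z) = im ⁻¹' Ioo 0 z.im := by
  rw [hStrip_of_nonneg hz, interior_preimage_im, interior_Icc]

lemma hStrip_neg (z : ℂ) : hStrip (-z) = Neg.neg ⁻¹' hStrip z := by
  have h := image_neg_uIcc (0 : ℝ) z.im
  rw [neg_zero] at h
  ext w
  change w.im ∈ [[0, -z.im]] ↔ -w.im ∈ [[0, z.im]]
  rw [← h, ← neg_neg w.im, neg_injective.mem_set_image, neg_neg]

variable {E : Type*} [NormedAddCommGroup E] [NormedSpace ℂ E] [CompleteSpace E]

theorem eqOn_zero_of_ofReal_eq_zero {h : ℝ} {u : ℂ → E} (hc : ContinuousOn u (im ⁻¹' Icc 0 h))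
    (hd : DifferentiableOn ℂ u (im ⁻¹' Ioo 0 h)) (h0 : ∀ t : ℝ, u t = 0) :
    EqOn u 0 (im ⁻¹' Icc 0 h) := by
  have h0' : ∀ w : ℂ, w.im = 0 → u w = 0 := fun w hw => by
    rw [← re_add_im w, hw, ofReal_zero, zero_mul, add_zero]
    exact h0 w.re
  rcases le_or_gt h 0 with hh | hh
  · exact fun w hw => h0' w (le_antisymm (hw.2.trans hh) hw.1)
  -- Extended by `0` below the axis, `u` becomes holomorphic on a half-plane.
  set v : ℂ → E := fun w => if w.im ≤ 0 then 0 else u w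
  have hU : IsOpen (im ⁻¹' Iio h) := isOpen_Iio.preimage continuous_im
  have hvc : ContinuousOn v (im ⁻¹' Iio h) :=
    continuousOn_ite_im_le continuousOn_const
      (hc.mono fun w hw => ⟨hw.2, hw.1.out.le⟩) fun w _ hw => (h0' w hw).symm
  have hvd : DifferentiableOn ℂ v (im ⁻¹' Iio h) :=
    differentiableOn_ite_im_le hU hvc (differentiableOn_const 0)
      (hd.mono fun w hw => ⟨hw.2, hw.1.out⟩)
  have hv0 : EqOn v 0 (im ⁻¹' Iio h) := by
    refine (hvd.analyticOnNhd hU).eqOn_zero_of_preconnected_of_eventuallyEq_zero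
      (convex_halfSpace_im_lt h).isPreconnected (z₀ := -I)
      (by simpa using hh.trans' neg_one_lt_zero) ?_
    filter_upwards [(isOpen_Iio.preimage continuous_im).mem_nhds
      (show (-I).im ∈ Iio 0 by simp)] with w hw
    exact if_pos hw.out.le
  have hu0 : EqOn u 0 (im ⁻¹' Ioo 0 h) := fun w hw => by
    simpa [v, hw.1.not_ge] using hv0 hw.2
  refine hu0.of_subset_closure hc continuousOn_const (preimage_mono Ioo_subset_Icc_self) ?_
  rw [closure_preimage_im, closure_Ioo hh.ne]

end Strip

section Continuation

variable {E : Type*} [NormedAddCommGroup E] [NormedSpace ℂ E] {α : ℝ → E →L[ℂ] E}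

theorem HasContVal.comp_neg {z : ℂ} {a b : E} (h : HasContVal α z a b) :
    HasContVal (fun t => α (-t)) (-z) a b := by
  obtain ⟨f, hc, hd, hreal, rfl⟩ := h
  refine ⟨fun w => f (-w), ?_, ?_, fun t => by simpa using hreal (-t), by simp⟩
  · rw [hStrip_neg]
    exact hc.comp continuous_neg.continuousOn (mapsTo_preimage _ _)
  · have hint : interior (Neg.neg ⁻¹' hStrip z) = Neg.neg ⁻¹' interior (hStrip z) :=
      ((Homeomorph.neg ℂ).preimage_interior _).symm
    rw [hStrip_neg, hint]
    exact hd.comp differentiable_neg.differentiableOn (mapsTo_preimage _ _)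

theorem hasContVal_comp_neg_iff {z : ℂ} {a b : E} :
    HasContVal (fun t => α (-t)) (-z) a b ↔ HasContVal α z a b :=
  ⟨fun h => by simpa using h.comp_neg, HasContVal.comp_neg⟩

variable [CompleteSpace E] (hadd : ∀ s t : ℝ, α (s + t) = (α s).comp (α t))
include hadd

/-- Both sides are continuations of `t ↦ α (t + s) a` on the strip, so they agree. -/
theorem continuation_add_ofReal {z : ℂ} (hz : 0 ≤ z.im) {a : E} {f : ℂ → E}
    (hc : ContinuousOn f (hStrip z)) (hd : DifferentiableOn ℂ f (interior (hStrip z)))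
    (hreal : ∀ t : ℝ, f t = α t a) (s : ℝ) {w : ℂ} (hw : w ∈ hStrip z) :
    f (w + s) = α s (f w) := by
  rw [interior_hStrip_of_nonneg hz] at hd
  rw [hStrip_of_nonneg hz] at hc hw
  have hmaps : ∀ S : Set ℝ, MapsTo (· + (s : ℂ)) (im ⁻¹' S) (im ⁻¹' S) := fun S w hw => by
    simpa using hw
  refine sub_eq_zero.1 (eqOn_zero_of_ofReal_eq_zero (u := fun w => f (w + s) - α s (f w))
    ((hc.comp (by fun_prop) (hmaps _)).sub ((α s).continuous.comp_continuousOn hc))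
    ((hd.comp (by fun_prop) (hmaps _)).sub ((α s).differentiable.comp_differentiableOn hd))
    (fun t => ?_) hw)
  rw [← ofReal_add, hreal, hreal, add_comm, hadd, ContinuousLinearMap.comp_apply, sub_self]

theorem HasContVal.add_of_nonneg {y z : ℂ} (hy : 0 ≤ y.im) (hz : 0 ≤ z.im) {a b c : E}
    (h₁ : HasContVal α z a b) (h₂ : HasContVal α y b c) : HasContVal α (y + z) a c := by
  obtain ⟨f, hfc, hfd, hfa, rfl⟩ := h₁
  obtain ⟨g, hgc, hgd, hgb, rfl⟩ := h₂
  have hyz : 0 ≤ (y + z).im := by simp only [add_im]; linarith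
  have seam : ∀ w : ℂ, w.im = z.im → f w = g (w - z) := fun w hw => by
    have hwz : w - z = ((w - z).re : ℂ) := by apply Complex.ext <;> simp [hw]
    rw [hwz, hgb, ← continuation_add_ofReal hadd hz hfc hfd hfa _ right_mem_uIcc, ← hwz,
      add_sub_cancel]
  have hc : ContinuousOn (fun w => if w.im ≤ z.im then f w else g (w - z)) (hStrip (y + z)) := by
    rw [hStrip_of_nonneg hz] at hfc
    rw [hStrip_of_nonneg hy] at hgc
    rw [hStrip_of_nonneg hyz]
    refine continuousOn_ite_im_le (hfc.mono fun w hw => ⟨hw.1.out.1, hw.2⟩)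
      (hgc.comp (by fun_prop) fun w hw => ?_) fun w _ hw => seam w hw
    have := hw.1.out.2
    simp only [mem_preimage, sub_im, mem_Icc, add_im] at this ⊢
    exact ⟨by linarith [hw.2.out], by linarith⟩
  refine ⟨_, hc, ?_, fun t => by simp [hz, hfa], ?_⟩
  · refine differentiableOn_ite_im_le isOpen_interior (hc.mono interior_subset) ?_ ?_ <;>
      rw [interior_hStrip_of_nonneg hyz]
    · rw [interior_hStrip_of_nonneg hz] at hfd
      exact hfd.mono fun w hw => ⟨hw.1.out.1, hw.2⟩
    rw [interior_hStrip_of_nonneg hy] at hgd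
    refine hgd.comp (by fun_prop) fun w hw => ?_
    have := hw.1.out.2
    simp only [mem_preimage, sub_im, mem_Ioo, add_im] at this ⊢
    exact ⟨by linarith [hw.2.out], by linarith⟩
  · split_ifs with h
    · rw [seam _ (le_antisymm h (by simp only [add_im]; linarith)), add_sub_cancel_right]
    · rw [add_sub_cancel_right]

theorem HasContVal.exists_of_add_of_nonneg {y z : ℂ} (hy : 0 ≤ y.im) (hz : 0 ≤ z.im) {a c : E}
    (h : HasContVal α (y + z) a c) : ∃ b, HasContVal α z a b ∧ HasContVal α y b c := by
  obtain ⟨F, hFc, hFd, hFa, rfl⟩ := h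
  have hyz : 0 ≤ (y + z).im := by simp only [add_im]; linarith
  have hsub : hStrip z ⊆ hStrip (y + z) := by
    rw [hStrip_of_nonneg hz, hStrip_of_nonneg hyz]
    exact preimage_mono (Icc_subset_Icc le_rfl (by simp only [add_im]; linarith))
  have hmaps : MapsTo (· + z) (hStrip y) (hStrip (y + z)) := fun w hw => by
    rw [hStrip_of_nonneg hy] at hw
    rw [hStrip_of_nonneg hyz]
    simp only [mem_preimage, add_im, mem_Icc] at hw ⊢
    constructor <;> linarith
  have hmaps' : MapsTo (· + z) (interior (hStrip y)) (interior (hStrip (y + z))) := fun w hw => by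
    rw [interior_hStrip_of_nonneg hy] at hw
    rw [interior_hStrip_of_nonneg hyz]
    simp only [mem_preimage, add_im, mem_Ioo] at hw ⊢
    constructor <;> linarith
  refine ⟨F z, ⟨F, hFc.mono hsub, hFd.mono (interior_mono hsub), hFa, rfl⟩,
    fun w => F (w + z), hFc.comp (by fun_prop) hmaps, hFd.comp (by fun_prop) hmaps',
    fun t => ?_, rfl⟩
  change F (t + z) = _
  rw [add_comm]
  exact continuation_add_ofReal hadd hyz hFc hFd hFa t (hsub right_mem_uIcc)

theorem hasContVal_add_iff_of_nonneg {y z : ℂ} (hy : 0 ≤ y.im) (hz : 0 ≤ z.im) (a c : E) :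
    (∃ b, HasContVal α z a b ∧ HasContVal α y b c) ↔ HasContVal α (y + z) a c :=
  ⟨fun ⟨_, h₁, h₂⟩ => h₁.add_of_nonneg hadd hy hz h₂,
    HasContVal.exists_of_add_of_nonneg hadd hy hz⟩

end Continuation

/-- If `y` and `z` lie on the same side of the real axis then `α_y ∘ α_z = α_{y+z}`
(equality of unbounded operators, i.e. of graphs). -/
theorem cont_comp_same_side
    {E : Type*} [NormedAddCommGroup E] [NormedSpace ℂ E] [CompleteSpace E]
    {α : ℝ → E →L[ℂ] E} (hα : IsOneParamRep α) {y z : ℂ}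
    (hside : (0 ≤ y.im ∧ 0 ≤ z.im) ∨ (y.im ≤ 0 ∧ z.im ≤ 0)) :
    ∀ a c : E, (∃ b, HasContVal α z a b ∧ HasContVal α y b c) ↔
      HasContVal α (y + z) a c := by
  intro a c
  rcases hside with ⟨hy, hz⟩ | ⟨hy, hz⟩
  · exact hasContVal_add_iff_of_nonneg hα.map_add hy hz a c
  · have hadd : ∀ s t : ℝ, α (-(s + t)) = (α (-s)).comp (α (-t)) := fun s t => by
      rw [neg_add, hα.map_add]
    simp only [← hasContVal_comp_neg_iff (α := α), neg_add]
    exact hasContVal_add_iff_of_nonneg hadd (by simpa using hy) (by simpa using hz) a c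
end
end

section
/- Let α be a strongly continuous one-parameter isometric representation on a Banach space E and z ∈ ℂ. Then the analytic continuation α_z is a densely defined operator with dense range. -/
/-! For `r ≠ 0` the Gaussian smoothing `G(w) = (r/√π) ∫ exp(-r²(t - w)²) α_t a dt` is
entire (differentiation under the integral sign, with a Gaussian dominating the derivative
uniformly on balls), and the substitution `t ↦ s + t` gives `G(s + w) = α_s G(w)` for real
`s`. Hence `ζ ↦ G(w + ζ)` shows that `G(w)` is in the domain of `α_z` with
`α_z G(w) = G(w + z)`; with `w = 0` and `w = -z` this puts `G(0)` in both the domain and the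
range of `α_z`. Finally `G(0) = (1/√π) ∫ exp(-u²) α_{u/r} a du → a` as `r → ∞` by dominated
convergence. -/

open Complex MeasureTheory Filter Topology Set

noncomputable section

open scoped Real

section GaussianKernel

variable {E : Type*} [NormedAddCommGroup E] [NormedSpace ℂ E]

theorem norm_cexp_neg_mul_sub_sq_le {b : ℝ} (hb : 0 ≤ b) (t : ℝ) {w : ℂ} {R : ℝ}
    (hw : ‖w‖ ≤ R) :
    ‖cexp (-b * (t - w) ^ 2)‖ ≤ rexp (b * R ^ 2) * rexp (-(b / 2) * t ^ 2) := by
  rw [norm_exp, ← Real.exp_add]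
  refine Real.exp_le_exp.2 ?_
  have hw' : w.re ^ 2 + w.im ^ 2 ≤ R ^ 2 := by
    rw [sq, sq, ← normSq_apply, ← Complex.sq_norm]
    exact pow_le_pow_left₀ (norm_nonneg w) hw 2
  have hsq : t ^ 2 / 2 - w.re ^ 2 ≤ (t - w.re) ^ 2 := by nlinarith [sq_nonneg (t - 2 * w.re)]
  simp only [neg_mul, neg_re, mul_re, ofReal_re, ofReal_im, sq, sub_re, sub_im, mul_im]
  nlinarith [mul_le_mul_of_nonneg_left hsq hb, mul_le_mul_of_nonneg_left hw' hb]

theorem integrable_cexp_neg_mul_sub_sq {b : ℝ} (hb : 0 < b) (w : ℂ) :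
    Integrable fun t : ℝ => cexp (-b * (t - w) ^ 2) :=
  ((integrable_exp_neg_mul_sq (half_pos hb)).const_mul _).mono'
    (by fun_prop) (ae_of_all _ fun t => norm_cexp_neg_mul_sub_sq_le hb.le t le_rfl)

theorem integrable_cexp_neg_mul_sub_sq_smul {b : ℝ} (hb : 0 < b) (w : ℂ) {φ : ℝ → E}
    (hφ : AEStronglyMeasurable φ) {M : ℝ} (hM : ∀ t, ‖φ t‖ ≤ M) :
    Integrable fun t : ℝ => cexp (-b * (t - w) ^ 2) • φ t :=
  (integrable_cexp_neg_mul_sub_sq hb w).smul_bdd M hφ (ae_of_all _ hM)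

theorem hasDerivAt_cexp_neg_mul_sub_sq (b : ℂ) (t : ℝ) (w : ℂ) :
    HasDerivAt (fun w => cexp (-b * (t - w) ^ 2))
      (2 * b * (t - w) * cexp (-b * (t - w) ^ 2)) w := by
  have hquad : HasDerivAt (fun w : ℂ => -b * (t - w) ^ 2) (2 * b * (t - w)) w :=
    ((((hasDerivAt_id' w).const_sub (t : ℂ)).fun_pow 2).const_mul (-b)).congr_deriv
      (by push_cast; ring)
  exact hquad.cexp.congr_deriv (mul_comm _ _)

theorem differentiable_integral_cexp_neg_mul_sub_sq_smul {b : ℝ} (hb : 0 < b) {φ : ℝ → E}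
    (hφ : AEStronglyMeasurable φ) {M : ℝ} (hM : ∀ t, ‖φ t‖ ≤ M) :
    Differentiable ℂ fun w : ℂ => ∫ t : ℝ, cexp (-b * (t - w) ^ 2) • φ t := by
  intro w₀
  set R := ‖w₀‖ + 1
  have hR : ∀ w ∈ Metric.ball w₀ 1, ‖w‖ ≤ R := fun w hw =>
    norm_le_norm_add_const_of_dist_le (Metric.mem_ball.1 hw).le
  set bound : ℝ → ℝ := fun t =>
    2 * b * (|t| + R) * (rexp (b * R ^ 2) * rexp (-(b / 2) * t ^ 2)) * M
  have hgauss : Integrable fun t : ℝ => rexp (-(b / 2) * t ^ 2) :=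
    integrable_exp_neg_mul_sq (half_pos hb)
  have habs_gauss : Integrable fun t : ℝ => |t| * rexp (-(b / 2) * t ^ 2) := by
    simpa [abs_mul] using (integrable_mul_exp_neg_mul_sq (half_pos hb)).abs
  have bound_int : Integrable bound :=
    ((habs_gauss.add (hgauss.const_mul R)).const_mul (2 * b * rexp (b * R ^ 2) * M)).congr
      (ae_of_all _ fun t => by simp only [bound, Pi.add_apply]; ring)
  have h_bound : ∀ t : ℝ, ∀ w ∈ Metric.ball w₀ 1,
      ‖(2 * b * (t - w) * cexp (-b * (t - w) ^ 2)) • φ t‖ ≤ bound t := by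
    intro t w hw
    have hdist : ‖(t : ℂ) - w‖ ≤ |t| + R :=
      (norm_sub_le _ _).trans (by rw [norm_real, Real.norm_eq_abs]; linarith [hR w hw])
    rw [norm_smul, norm_mul, norm_mul, norm_mul, Complex.norm_two, norm_real,
      Real.norm_of_nonneg hb.le]
    simp only [bound]
    gcongr
    · exact norm_cexp_neg_mul_sub_sq_le hb.le t (hR w hw)
    · exact hM t
  have key := hasDerivAt_integral_of_dominated_loc_of_deriv_le
    (F' := fun w t => (2 * b * (t - w) * cexp (-b * (t - w) ^ 2)) • φ t)
    (Metric.ball_mem_nhds w₀ one_pos)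
    (Eventually.of_forall fun w => (by fun_prop : Continuous _).aestronglyMeasurable.smul hφ)
    (integrable_cexp_neg_mul_sub_sq_smul hb w₀ hφ hM)
    ((by fun_prop : Continuous _).aestronglyMeasurable.smul hφ)
    (ae_of_all _ h_bound) bound_int
    (ae_of_all _ fun t w _ => (hasDerivAt_cexp_neg_mul_sub_sq b t w).smul_const (φ t))
  exact key.2.differentiableAt

end GaussianKernel

theorem tendsto_gaussian_smoothing {E : Type*} [NormedAddCommGroup E] [NormedSpace ℝ E]
    [CompleteSpace E] {φ : ℝ → E} (hφ : Continuous φ) {M : ℝ} (hM : ∀ t, ‖φ t‖ ≤ M) :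
    Tendsto (fun r : ℝ => (r / √π) • ∫ t : ℝ, rexp (-r ^ 2 * t ^ 2) • φ t) atTop
      (𝓝 (φ 0)) := by
  have hrescale (r : ℝ) (hr : 0 < r) :
      (r / √π) • ∫ t : ℝ, rexp (-r ^ 2 * t ^ 2) • φ t
        = (1 / √π) • ∫ u : ℝ, rexp (-u ^ 2) • φ (u / r) := by
    have hsubst := Measure.integral_comp_div (fun t : ℝ => rexp (-r ^ 2 * t ^ 2) • φ t) r
    rw [abs_of_pos hr] at hsubst
    rw [div_eq_mul_one_div r, mul_comm, mul_smul, ← hsubst]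
    congr 2
    ext u
    field_simp
  have hgauss : Integrable fun u : ℝ => rexp (-u ^ 2) := by
    simpa using integrable_exp_neg_mul_sq one_pos
  have hlim : Tendsto (fun r : ℝ => ∫ u : ℝ, rexp (-u ^ 2) • φ (u / r)) atTop
      (𝓝 (∫ u : ℝ, rexp (-u ^ 2) • φ 0)) := by
    refine tendsto_integral_filter_of_dominated_convergence (fun u => rexp (-u ^ 2) * M)
      (Eventually.of_forall fun r => (by fun_prop : Continuous _).aestronglyMeasurable)
      (Eventually.of_forall fun r => ae_of_all _ fun u => ?_) (hgauss.mul_const M)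
      (ae_of_all _ fun u => ?_)
    · rw [norm_smul, Real.norm_of_nonneg (Real.exp_pos _).le]
      exact mul_le_mul_of_nonneg_left (hM _) (Real.exp_pos _).le
    · exact ((hφ.tendsto 0).comp (tendsto_const_nhds.div_atTop tendsto_id)).const_smul _
  have hmass : (1 / √π) • ∫ u : ℝ, rexp (-u ^ 2) • φ 0 = φ 0 := by
    have := integral_gaussian 1
    simp only [neg_mul, one_mul, div_one] at this
    rw [integral_smul_const, this, smul_smul, one_div, inv_mul_cancel₀ (by positivity), one_smul]
  rw [← hmass]
  exact (hlim.const_smul _).congr'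
    ((eventually_gt_atTop 0).mono fun r hr => (hrescale r hr).symm)

section GaussSmooth

variable {E : Type*} [NormedAddCommGroup E] [NormedSpace ℂ E] {α : ℝ → E →L[ℂ] E}

theorem IsOneParamRep.norm_apply_le (hα : IsOneParamRep α) (t : ℝ) (a : E) :
    ‖α t a‖ ≤ ‖a‖ :=
  (α t).le_of_opNorm_le (hα.norm_le t) a |>.trans_eq (one_mul _)

theorem hasContVal_of_ofReal_add {f : ℂ → E} (hf : Differentiable ℂ f)
    (hcov : ∀ (s : ℝ) (w : ℂ), f (s + w) = α s (f w)) (z w : ℂ) :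
    HasContVal α z (f w) (f (w + z)) := by
  have hdiff : Differentiable ℂ fun ζ => f (w + ζ) :=
    hf.comp (differentiable_const w |>.add differentiable_id)
  exact ⟨fun ζ => f (w + ζ), hdiff.continuous.continuousOn, hdiff.differentiableOn,
    fun t => by simpa only [add_comm] using hcov t w, rfl⟩

def gaussSmooth (α : ℝ → E →L[ℂ] E) (a : E) (r : ℝ) (w : ℂ) : E :=
  (r / √π) • ∫ t : ℝ, cexp (-((r ^ 2 : ℝ) : ℂ) * (t - w) ^ 2) • α t a

variable (hα : IsOneParamRep α) (a : E) {r : ℝ}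
include hα

theorem differentiable_gaussSmooth (hr : r ≠ 0) : Differentiable ℂ (gaussSmooth α a r) :=
  (differentiable_integral_cexp_neg_mul_sub_sq_smul (sq_pos_of_ne_zero hr)
    (hα.strong_cont a).aestronglyMeasurable (hα.norm_apply_le · a)).const_smul _

theorem gaussSmooth_ofReal_add [CompleteSpace E] (hr : r ≠ 0) (s : ℝ) (w : ℂ) :
    gaussSmooth α a r (s + w) = α s (gaussSmooth α a r w) := by
  rw [gaussSmooth, gaussSmooth, ContinuousLinearMap.map_smul_of_tower,
    ← (α s).integral_comp_comm (integrable_cexp_neg_mul_sub_sq_smul (sq_pos_of_ne_zero hr) w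
      (hα.strong_cont a).aestronglyMeasurable (hα.norm_apply_le · a))]
  conv_lhs => rw [← integral_add_left_eq_self _ s]
  congr 2
  ext t
  rw [map_smul, ← ContinuousLinearMap.comp_apply, ← hα.map_add]
  push_cast
  ring_nf

theorem hasContVal_gaussSmooth [CompleteSpace E] (hr : r ≠ 0) (z w : ℂ) :
    HasContVal α z (gaussSmooth α a r w) (gaussSmooth α a r (w + z)) :=
  hasContVal_of_ofReal_add (differentiable_gaussSmooth hα a hr)
    (gaussSmooth_ofReal_add hα a hr) z w

theorem tendsto_gaussSmooth_zero [CompleteSpace E] :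
    Tendsto (fun r => gaussSmooth α a r 0) atTop (𝓝 a) := by
  have hzero (r : ℝ) :
      gaussSmooth α a r 0 = (r / √π) • ∫ t : ℝ, rexp (-r ^ 2 * t ^ 2) • α t a := by
    simp only [gaussSmooth, sub_zero]
    congr 2
    ext t
    rw [← Complex.coe_smul, ofReal_exp]
    push_cast
    ring_nf
  simpa [hzero, hα.map_zero] using
    tendsto_gaussian_smoothing (hα.strong_cont a) (hα.norm_apply_le · a)

end GaussSmooth

/-- `α_z` is densely defined and has dense range. -/
theorem cont_densely_defined_dense_range
    {E : Type*} [NormedAddCommGroup E] [NormedSpace ℂ E] [CompleteSpace E]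
    {α : ℝ → E →L[ℂ] E} (hα : IsOneParamRep α) (z : ℂ) :
    Dense {a : E | ∃ b, HasContVal α z a b} ∧
    Dense {b : E | ∃ a, HasContVal α z a b} := by
  refine ⟨fun a => mem_closure_of_tendsto (tendsto_gaussSmooth_zero hα a) ?_,
    fun a => mem_closure_of_tendsto (tendsto_gaussSmooth_zero hα a) ?_⟩
  · filter_upwards [eventually_ne_atTop 0] with r hr
    exact ⟨_, hasContVal_gaussSmooth hα a hr z 0⟩
  · filter_upwards [eventually_ne_atTop 0] with r hr
    exact ⟨_, by simpa only [neg_add_cancel] using hasContVal_gaussSmooth hα a hr z (-z)⟩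
end
end

section
/- Let α be a strongly continuous one-parameter isometric representation on a Banach space E and z ∈ ℂ. Then the analytic continuation α_z is a closed operator: if (a_k) is a sequence in D(α_z) with a_k → a and α_z(a_k) → b in norm, then a ∈ D(α_z) and α_z(a) = b. -/
/-!
A continuation `f` of `t ↦ α_t a` satisfies `f (t + w) = α_t (f w)` on the strip: the difference
of the two sides vanishes on `ℝ`, and a function continuous on the closed strip, holomorphic inside
and zero on `ℝ` vanishes identically (extended by zero across `ℝ` it is continuous and holomorphic
off `ℝ`, hence holomorphic by Morera's theorem, and the identity theorem applies). Consequently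
`f` is bounded on the strip, by `‖a‖` on `ℝ` and by `‖f z‖` on the other edge, and the three-lines
theorem bounds `f` by `max ‖a‖ ‖f z‖`. Applied to differences, this makes continuations of a
sequence `aₖ` with `aₖ → a`, `α_z aₖ → b` uniformly Cauchy on the strip, and their uniform limit
is a continuation of `a` taking the value `b` at `z`.
-/

open Complex MeasureTheory Filter Topology Set

noncomputable section

open scoped Interval

section RealLineRemovable

variable {E : Type*} [NormedAddCommGroup E] [NormedSpace ℂ E] {f : ℂ → E} {U : Set ℂ}

/- `wedgeIntegral z w f + wedgeIntegral w z f` is the integral of `f` over the boundary of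
`Rectangle z w`. -/
theorem wedgeIntegral_add_wedgeIntegral_eq_of_horizontal_cut (z w : ℂ) {y : ℝ}
    (hy : y ∈ [[z.im, w.im]]) (hf : ContinuousOn f (Rectangle z w)) :
    wedgeIntegral z w f + wedgeIntegral w z f =
      (wedgeIntegral z (w.re + y * I) f + wedgeIntegral (w.re + y * I) z f) +
        (wedgeIntegral (z.re + y * I) w f + wedgeIntegral w (z.re + y * I) f) := by
  have hvert : ∀ x ∈ [[z.re, w.re]], ∀ y₁ ∈ [[z.im, w.im]],
      IntervalIntegrable (fun s : ℝ => f (x + s * I)) volume y₁ y := by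
    intro x hx y₁ hy₁
    refine ContinuousOn.intervalIntegrable (hf.comp (by fun_prop) fun s hs => ?_)
    simpa [Rectangle, mem_reProdIm, hx] using uIcc_subset_uIcc hy₁ hy hs
  simp only [wedgeIntegral_add_wedgeIntegral_eq, add_re, add_im, ofReal_re, ofReal_im, mul_re,
    mul_im, I_re, I_im, mul_zero, mul_one, sub_zero, zero_add, add_zero]
  rw [← intervalIntegral.integral_add_adjacent_intervals
      (hvert _ right_mem_uIcc _ left_mem_uIcc) (hvert _ right_mem_uIcc _ right_mem_uIcc).symm,
    ← intervalIntegral.integral_add_adjacent_intervals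
      (hvert _ left_mem_uIcc _ left_mem_uIcc) (hvert _ left_mem_uIcc _ right_mem_uIcc).symm]
  simp only [smul_add]
  abel

theorem isConservativeOn_of_differentiableOn_diff_real (hc : ContinuousOn f U)
    (hd : DifferentiableOn ℂ f (U \ im ⁻¹' {0})) : IsConservativeOn f U := by
  have hrect : ∀ z w, Rectangle z w ⊆ U → (0 : ℝ) ∉ Ioo (min z.im w.im) (max z.im w.im) →
      wedgeIntegral z w f + wedgeIntegral w z f = 0 := by
    intro z w hzw h0
    rw [wedgeIntegral_add_wedgeIntegral_eq]
    refine integral_boundary_rect_eq_zero_of_continuousOn_of_differentiableOn f z w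
      (hc.mono hzw) (hd.mono fun x hx => ⟨hzw ?_, fun hx0 => h0 ?_⟩)
    · exact ⟨Ioo_subset_Icc_self hx.1, Ioo_subset_Icc_self hx.2⟩
    · rw [mem_preimage, mem_singleton_iff] at hx0
      exact hx0 ▸ hx.2
  intro z w hzw
  rw [← add_eq_zero_iff_eq_neg]
  by_cases h0 : (0 : ℝ) ∈ Ioo (min z.im w.im) (max z.im w.im)
  · have h0' : (0 : ℝ) ∈ [[z.im, w.im]] := Ioo_subset_Icc_self h0
    have hlow : Rectangle z (w.re + (0 : ℝ) * I) ⊆ U := fun x hx => hzw <| by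
      simp only [Rectangle, mem_reProdIm, ofReal_zero, zero_mul, add_zero, ofReal_re,
        ofReal_im] at hx
      exact ⟨hx.1, uIcc_subset_uIcc_left h0' hx.2⟩
    have hup : Rectangle (z.re + (0 : ℝ) * I) w ⊆ U := fun x hx => hzw <| by
      simp only [Rectangle, mem_reProdIm, ofReal_zero, zero_mul, add_zero, ofReal_re,
        ofReal_im] at hx
      exact ⟨hx.1, uIcc_subset_uIcc_right h0' hx.2⟩
    rw [wedgeIntegral_add_wedgeIntegral_eq_of_horizontal_cut z w h0' (hc.mono hzw),
      hrect _ _ hlow (by simpa using le_of_lt), hrect _ _ hup (by simpa using le_of_lt), add_zero]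
  · exact hrect z w hzw h0

theorem differentiableOn_of_differentiableOn_diff_real [CompleteSpace E] (hU : IsOpen U)
    (hc : ContinuousOn f U) (hd : DifferentiableOn ℂ f (U \ im ⁻¹' {0})) :
    DifferentiableOn ℂ f U :=
  (isConservativeOn_and_continuousOn_iff_isDifferentiableOn hU).1
    ⟨isConservativeOn_of_differentiableOn_diff_real hc hd, hc⟩

end RealLineRemovable

section Strip

variable {z w : ℂ}

theorem hStrip_eq_preimage (z : ℂ) : hStrip z = im ⁻¹' [[0, z.im]] := rfl

theorem isClosed_hStrip (z : ℂ) : IsClosed (hStrip z) :=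
  isClosed_Icc.preimage continuous_im

theorem interior_hStrip (z : ℂ) :
    interior (hStrip z) = im ⁻¹' Ioo (min 0 z.im) (max 0 z.im) := by
  rw [hStrip_eq_preimage, interior_preimage_im, uIcc, interior_Icc]

theorem ofReal_mem_hStrip (t : ℝ) (z : ℂ) : (t : ℂ) ∈ hStrip z := by
  simp [hStrip]

theorem self_mem_hStrip (z : ℂ) : z ∈ hStrip z := right_mem_uIcc

theorem ofReal_add_mem_hStrip (t : ℝ) : (t : ℂ) + w ∈ hStrip z ↔ w ∈ hStrip z := by
  simp [hStrip]

theorem ofReal_add_mem_interior_hStrip (t : ℝ) :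
    (t : ℂ) + w ∈ interior (hStrip z) ↔ w ∈ interior (hStrip z) := by
  simp [interior_hStrip]

end Strip

section Uniqueness

variable {E : Type*} [NormedAddCommGroup E] [NormedSpace ℂ E] [CompleteSpace E] {z : ℂ}
  {g : ℂ → E}

theorem differentiableOn_indicator_hStrip (hgc : ContinuousOn g (hStrip z))
    (hgd : DifferentiableOn ℂ g (interior (hStrip z))) (hg0 : ∀ w : ℂ, w.im = 0 → g w = 0) :
    DifferentiableOn ℂ ((hStrip z).indicator g) (im ⁻¹' Ioo (-|z.im|) |z.im|) := by
  set S := hStrip z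
  set U := im ⁻¹' Ioo (-|z.im|) |z.im|
  have hUS : ∀ w ∈ U, w ∈ S → w.im ≠ 0 → w ∈ interior S := by
    intro w hwU hwS hw0
    rw [interior_hStrip]
    simp only [S, hStrip, U, mem_preimage, mem_Ioo, mem_uIcc] at *
    constructor <;> grind
  refine differentiableOn_of_differentiableOn_diff_real (isOpen_Ioo.preimage continuous_im)
    ?_ ?_
  · classical
    rw [← piecewise_eq_indicator]
    refine ContinuousOn.piecewise (fun w hw => ?_)
      (hgc.mono fun w hw => (isClosed_hStrip z).closure_subset hw.2) continuousOn_const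
    have hwS : w ∈ S := (isClosed_hStrip z).frontier_subset hw.2
    exact hg0 w (by_contra fun h0 => hw.2.2 (hUS w hw.1 hwS h0))
  · rintro w ⟨hwU, hw0⟩
    refine DifferentiableAt.differentiableWithinAt ?_
    by_cases hwS : w ∈ S
    · have hw := isOpen_interior.mem_nhds (hUS w hwU hwS hw0)
      exact (hgd.differentiableAt hw).congr_of_eventuallyEq
        (eventually_of_mem hw fun v hv => indicator_of_mem (interior_subset hv) g)
    · have hw := (isClosed_hStrip z).isOpen_compl.mem_nhds hwS
      exact (differentiableAt_const 0).congr_of_eventuallyEq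
        (eventually_of_mem hw fun v hv => indicator_of_notMem hv g)

theorem eqOn_zero_hStrip_of_forall_ofReal_eq_zero (hgc : ContinuousOn g (hStrip z))
    (hgd : DifferentiableOn ℂ g (interior (hStrip z))) (hg0 : ∀ t : ℝ, g t = 0) :
    EqOn g 0 (hStrip z) := by
  have hreal : ∀ w : ℂ, w.im = 0 → g w = 0 := fun w hw => by
    rw [← re_add_im w, hw, ofReal_zero, zero_mul, add_zero]
    exact hg0 _
  rcases eq_or_ne z.im 0 with hz | hz
  · exact fun w hw => hreal w (by simpa [hStrip, hz] using hw)
  set S := hStrip z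
  set U := im ⁻¹' Ioo (-|z.im|) |z.im|
  have hU : IsOpen U := isOpen_Ioo.preimage continuous_im
  set w₀ : ℂ := ((-z.im / 2 : ℝ) : ℂ) * I
  have hw₀U : w₀ ∈ U := by
    simp only [w₀, U, mem_preimage, mul_I_im, ofReal_re, mem_Ioo]
    constructor <;> cases abs_cases z.im <;> grind
  have hw₀S : w₀ ∉ S := by
    simp only [w₀, S, hStrip, mem_ofPred_eq, mul_I_im, ofReal_re, mem_uIcc]
    grind
  have hG0 : EqOn (S.indicator g) 0 U :=
    ((differentiableOn_indicator_hStrip hgc hgd hreal).analyticOnNhd hU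
      ).eqOn_zero_of_preconnected_of_eventuallyEq_zero
      ((convex_Ioo _ _).linear_preimage imLm).isPreconnected hw₀U
      (eventually_of_mem ((isClosed_hStrip z).isOpen_compl.mem_nhds hw₀S)
        fun v hv => indicator_of_notMem hv g)
  have hSU : interior S ⊆ U := by
    intro w hw
    rw [interior_hStrip] at hw
    simp only [U, mem_preimage, mem_Ioo] at *
    constructor <;> grind
  have hint : EqOn g 0 (interior S) := fun w hw => by
    simpa [indicator_of_mem (interior_subset hw)] using hG0 (hSU hw)
  refine hint.of_subset_closure hgc continuousOn_const interior_subset ?_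
  rw [interior_hStrip, closure_preimage_im, closure_Ioo (min_lt_max.2 hz.symm).ne]
  rfl

end Uniqueness

namespace IsOneParamRep

variable {E : Type*} [NormedAddCommGroup E] [NormedSpace ℂ E] {α : ℝ → E →L[ℂ] E}

theorem norm_apply_le_s9 (hα : IsOneParamRep α) (t : ℝ) (x : E) : ‖α t x‖ ≤ ‖x‖ := by
  simpa using (α t).le_of_opNorm_le (hα.norm_le t) x

variable [CompleteSpace E] {z : ℂ} {a b : E} {f : ℂ → E}

theorem continuation_ofReal_add (hα : IsOneParamRep α) (hfc : ContinuousOn f (hStrip z))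
    (hfd : DifferentiableOn ℂ f (interior (hStrip z))) (hfr : ∀ t : ℝ, f t = α t a) (t : ℝ) :
    ∀ w ∈ hStrip z, f (t + w) = α t (f w) := by
  have hzero := eqOn_zero_hStrip_of_forall_ofReal_eq_zero (z := z)
    (g := fun w => f (t + w) - α t (f w)) ?_ ?_ ?_
  · exact fun w hw => sub_eq_zero.1 (hzero hw)
  · exact (hfc.comp (by fun_prop) fun w hw => (ofReal_add_mem_hStrip t).2 hw).sub
      ((α t).continuous.comp_continuousOn hfc)
  · exact (hfd.comp (by fun_prop) fun w hw => (ofReal_add_mem_interior_hStrip t).2 hw).sub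
      ((α t).differentiable.comp_differentiableOn hfd)
  · intro s
    simp [← ofReal_add, hfr, hα.map_add]

theorem norm_continuation_le (hα : IsOneParamRep α) (hfc : ContinuousOn f (hStrip z))
    (hfd : DifferentiableOn ℂ f (interior (hStrip z))) (hfr : ∀ t : ℝ, f t = α t a)
    (hfz : f z = b) : ∀ w ∈ hStrip z, ‖f w‖ ≤ max ‖a‖ ‖b‖ := by
  have hfeq := hα.continuation_ofReal_add hfc hfd hfr
  -- `f w = α_{Re w} (f (i Im w))`, so `f` is bounded by its bound on the segment `[0, i Im z]`.
  have hvert : ∀ w ∈ hStrip z, (w.im : ℂ) * I ∈ hStrip z := fun w hw => by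
    simpa [hStrip] using hw
  obtain ⟨M, hM⟩ := isCompact_uIcc.exists_bound_of_continuousOn
    (f := fun y : ℝ => f (y * I)) (hfc.comp (by fun_prop) fun y hy => by simpa [hStrip] using hy)
  have hbdd : ∀ w ∈ hStrip z, ‖f w‖ ≤ M := fun w hw => by
    rw [← re_add_im w, hfeq _ _ (hvert w hw)]
    exact (hα.norm_apply_le_s9 _ _).trans (hM _ hw)
  have hedge : ∀ w : ℂ, w.im = 0 ∨ w.im = z.im → ‖f w‖ ≤ max ‖a‖ ‖b‖ := by
    rintro w (hw | hw)
    · rw [← re_add_im w, hw, ofReal_zero, zero_mul, add_zero, hfr]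
      exact (hα.norm_apply_le_s9 _ _).trans (le_max_left _ _)
    · have hw' : w = ((w.re - z.re : ℝ) : ℂ) + z := by apply Complex.ext <;> simp [hw]
      rw [hw', hfeq _ _ (self_mem_hStrip z), hfz]
      exact (hα.norm_apply_le_s9 _ _).trans (le_max_right _ _)
  intro w hw
  refine PhragmenLindelof.horizontal_strip (a := min 0 z.im) (b := max 0 z.im) ?_ ?_
    (fun v hv => hedge v ?_) (fun v hv => hedge v ?_) hw.1 hw.2
  · refine ⟨by rwa [interior_hStrip] at hfd, hfc.mono ?_⟩
    exact closure_minimal (preimage_mono Ioo_subset_Icc_self) (isClosed_hStrip z)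
  · -- `c = -1` rather than `0`: when `z.im = 0` the bound `π / (b - a)` is `π / 0 = 0`.
    have hc : -1 < Real.pi / (max 0 z.im - min 0 z.im) :=
      neg_one_lt_zero.trans_le (div_nonneg Real.pi_pos.le (sub_nonneg.2 min_le_max))
    refine ⟨-1, hc, 0, Asymptotics.IsBigO.of_bound M
      (eventually_inf_principal.2 (Eventually.of_forall fun v hv => ?_))⟩
    simpa using hbdd v (preimage_mono Ioo_subset_Icc_self hv)
  · rw [hv]; exact min_choice 0 z.im
  · rw [hv]; exact max_choice 0 z.im

end IsOneParamRep

theorem uniformCauchySeqOn_of_dist_le {α β γ : Type*} [PseudoMetricSpace β]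
    [PseudoMetricSpace γ] {F : ℕ → α → β} {s : Set α} {u : ℕ → γ} (hu : CauchySeq u)
    (h : ∀ m n, ∀ x ∈ s, dist (F m x) (F n x) ≤ dist (u m) (u n)) :
    UniformCauchySeqOn F atTop s := by
  rw [Metric.uniformCauchySeqOn_iff]
  intro ε hε
  obtain ⟨N, hN⟩ := Metric.cauchySeq_iff.1 hu ε hε
  exact ⟨N, fun m hm n hn x hx => (h m n x hx).trans_lt (hN m hm n hn)⟩

theorem UniformCauchySeqOn.tendstoUniformlyOn_limUnder {ι α β : Type*} [UniformSpace β]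
    [CompleteSpace β] [Nonempty β] {F : ι → α → β} {s : Set α} {p : Filter ι} [p.NeBot]
    (hF : UniformCauchySeqOn F p s) :
    TendstoUniformlyOn F (fun x => limUnder p (F · x)) p s :=
  hF.tendstoUniformlyOn_of_tendsto fun _ hx =>
    tendsto_nhds_limUnder (CompleteSpace.complete (hF.cauchy_map hx))

/-- `α_z` is a closed operator: if `aₖ ∈ D(α_z)`, `aₖ → a` and `α_z aₖ → b` in norm, then
`a ∈ D(α_z)` and `α_z a = b`. -/
theorem cont_closed
    {E : Type*} [NormedAddCommGroup E] [NormedSpace ℂ E] [CompleteSpace E]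
    {α : ℝ → E →L[ℂ] E} (hα : IsOneParamRep α) (z : ℂ) (a b : E) (as bs : ℕ → E)
    (h : ∀ k, HasContVal α z (as k) (bs k))
    (ha : Tendsto as atTop (nhds a)) (hb : Tendsto bs atTop (nhds b)) :
    HasContVal α z a b := by
  choose f hfc hfd hfr hfz using h
  have hcauchy : UniformCauchySeqOn f atTop (hStrip z) := by
    refine uniformCauchySeqOn_of_dist_le (ha.prodMk_nhds hb).cauchySeq fun m n w hw => ?_
    rw [dist_eq_norm, dist_eq_norm, Prod.norm_def]
    refine hα.norm_continuation_le ((hfc m).sub (hfc n)) ((hfd m).sub (hfd n)) (fun t => ?_)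
      (by simp [hfz]) w hw
    simp [hfr]
  have hF := hcauchy.tendstoUniformlyOn_limUnder
  refine ⟨_, hF.continuousOn (Frequently.of_forall hfc),
    (hF.tendstoLocallyUniformlyOn.mono interior_subset).differentiableOn
      (Eventually.of_forall hfd) isOpen_interior, fun t => ?_, ?_⟩
  · exact tendsto_nhds_unique (hF.tendsto_at (ofReal_mem_hStrip t z))
      ((((α t).continuous.tendsto a).comp ha).congr fun k => (hfr k t).symm)
  · exact tendsto_nhds_unique (hF.tendsto_at (self_mem_hStrip z)) (by simpa [hfz] using hb)
end
end
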